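/- arXiv:2301.10485 — 2 statements merged into one kernel-verified Lean document; each statement's English description precedes it below -/
import Mathlib

section
/- For every universal coBüchi automaton A, every k ∈ ℕ, all f_1, f_2 ∈ CF(A,k), and every ω-word w over Σ: if g_0 g_1 …, h_0 h_1 … and l_0 l_1 … denote the runs of D(A,k) on w starting from g_0 = f_1, h_0 = f_2 and l_0 = f_1 ⊔ f_2 respectively, then for all positions i ≥ 0 and all states q, l_i(q) = max(g_i(q), h_i(q)), i.e. l_i = g_i ⊔ h_i; consequently the run from f_1 ⊔ f_2 avoids unsafe states if and only if both the run from f_1 and the run from f_2 avoid unsafe states. -/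
open scoped Classical

/-- A preMealy machine over input alphabet `I`, output alphabet `O`, with state type `M`. -/
structure PreMealy (I O M : Type) where
  init : M
  trans : M → I → Option (O × M)

namespace PreMealy

variable {I O M : Type}

/-- One step of a preMealy machine on a pair (input, output): defined iff the transition
on the input is defined and produces exactly the given output. -/
noncomputable def step (P : PreMealy I O M) (m : M) (p : I × O) : Option M :=
  match P.trans m p.1 with
  | some (o, m') => if o = p.2 then some m' else none
  | none => none

/-- Running a preMealy machine on a finite word of (input, output) pairs. -/
noncomputable def runFrom (P : PreMealy I O M) : M → List (I × O) → Option M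
  | m, [] => some m
  | m, p :: u =>
    match P.step m p with
    | some m' => runFrom P m' u
    | none => none

/-- The language `L(P)` of finite words in `(I·O)*` accepted by `P`. -/
def lang (P : PreMealy I O M) : Set (List (I × O)) :=
  { u | (P.runFrom P.init u).isSome }

/-- The ω-language `L_ω(P)`: ω-words all of whose finite prefixes belong to `L(P)`. -/
def omegaLang (P : PreMealy I O M) : Set (ℕ → I × O) :=
  { w | ∀ n : ℕ, ((List.range n).map w) ∈ P.lang }

/-- `P` is a (complete) Mealy machine when its transition function is total. -/
def Total (P : PreMealy I O M) : Prop :=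
  ∀ m i, (P.trans m i).isSome

/-- A hole of `P` is a pair (state, input) on which the transition is undefined. -/
def Hole (P : PreMealy I O M) (m : M) (i : I) : Prop :=
  P.trans m i = none

/-- `Left_p`: the set of finite words reaching state `p` from the initial state. -/
def leftLang (P : PreMealy I O M) (p : M) : Set (List (I × O)) :=
  { u | P.runFrom P.init u = some p }

end PreMealy

/-- `P₁ ⪯ P₂`: `P₁` is a subgraph of `P₂`. -/
def Subgraph {I O M₁ M₂ : Type} (P₁ : PreMealy I O M₁) (P₂ : PreMealy I O M₂) : Prop :=
  ∃ Φ : M₁ → M₂, Function.Injective Φ ∧ Φ P₁.init = P₂.init ∧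
    ∀ p i o q, P₁.trans p i = some (o, q) ↔ P₂.trans (Φ p) i = some (o, Φ q)

/-- `S` is `P`-realizable: some (finite-state, complete) Mealy machine extends `P`
and its ω-language is included in `S ⊆ (I·O)^ω`. -/
def PRealizable {I O M : Type} (P : PreMealy I O M) (S : Set (ℕ → I × O)) : Prop :=
  ∃ (N : Type) (_ : Fintype N) (Mach : PreMealy I O N),
    Mach.Total ∧ Subgraph P Mach ∧ Mach.omegaLang ⊆ S

/-- Quotient (left derivative) of a set of ω-words by a finite word. -/
def wordQuot {α : Type} (u : List α) (S : Set (ℕ → α)) : Set (ℕ → α) :=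
  { v | (fun n => if h : n < u.length then u.get ⟨n, h⟩ else v (n - u.length)) ∈ S }

/-- Interleaving of an ω-word over `I × O` into an ω-word over `Σ = I ⊕ O`. -/
def interleave {I O : Type} (w : ℕ → I × O) : ℕ → I ⊕ O :=
  fun n => if n % 2 = 0 then Sum.inl (w (n / 2)).1 else Sum.inr (w (n / 2)).2

/-- Flattening of a finite word over `I × O` into a word over `Σ = I ⊕ O`. -/
def flattenWord {I O : Type} (u : List (I × O)) : List (I ⊕ O) :=
  u.flatMap fun p => [Sum.inl p.1, Sum.inr p.2]

/-- `P`-realizability of a specification over `Σ = I ⊕ O`. -/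
def PRealizableSigma {I O M : Type} (P : PreMealy I O M) (S : Set (ℕ → I ⊕ O)) : Prop :=
  ∃ (N : Type) (_ : Fintype N) (Mach : PreMealy I O N),
    Mach.Total ∧ Subgraph P Mach ∧ ∀ w ∈ Mach.omegaLang, interleave w ∈ S

/-- Realizability of a specification over `Σ = I ⊕ O` by some Mealy machine. -/
def RealizableSigma (I O : Type) (S : Set (ℕ → I ⊕ O)) : Prop :=
  ∃ (N : Type) (_ : Fintype N) (Mach : PreMealy I O N),
    Mach.Total ∧ ∀ w ∈ Mach.omegaLang, interleave w ∈ S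

/-- A universal coBüchi automaton; `col1 q` means state `q` has color 1. -/
structure UCB (σ Q : Type) where
  init : Set Q
  δ : Q → σ → Set Q
  δ_ne : ∀ q a, (δ q a).Nonempty
  col1 : Q → Prop

namespace UCB

variable {σ Q : Type}

/-- `ρ` is a run of `A` on the ω-word `w`. -/
def Run (A : UCB σ Q) (w : ℕ → σ) (ρ : ℕ → Q) : Prop :=
  ρ 0 ∈ A.init ∧ ∀ n, ρ (n + 1) ∈ A.δ (ρ n) (w n)

/-- `L^∀_k(A)`: every run visits 1-colored states at most `k` times. -/
def langK (A : UCB σ Q) (k : ℕ) : Set (ℕ → σ) :=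
  { w | ∀ ρ : ℕ → Q, A.Run w ρ →
      ∀ s : Finset ℕ, (∀ j ∈ s, A.col1 (ρ j)) → s.card ≤ k }

/-- `L^∀(A)`: every run visits 1-colored states only finitely often. -/
def langForall (A : UCB σ Q) : Set (ℕ → σ) :=
  { w | ∀ ρ : ℕ → Q, A.Run w ρ → { j | A.col1 (ρ j) }.Finite }

/-- A run prefix of `A` on a finite word `p` (only `ρ 0, …, ρ p.length` are relevant). -/
def RunPrefix (A : UCB σ Q) (p : List σ) (ρ : ℕ → Q) : Prop :=
  ρ 0 ∈ A.init ∧ ∀ (j : ℕ) (h : j < p.length), ρ (j + 1) ∈ A.δ (ρ j) (p.get ⟨j, h⟩)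

/-- The set of states reachable from a set of states while reading a finite word. -/
def postSet (A : UCB σ Q) : Set Q → List σ → Set Q
  | S, [] => S
  | S, a :: u => postSet A (⋃ q ∈ S, A.δ q a) u

end UCB

/-- The set `CF(A,k)` of `k`-counting functions, as integer-valued functions. -/
def CFset (Q : Type) (k : ℕ) : Set (Q → ℤ) :=
  { f | ∀ q, -1 ≤ f q ∧ f q ≤ (k : ℤ) + 1 }

/-- The transition function `δ^D` of the determinization `D(A,k)` on counting functions. -/
noncomputable def detTransFun {σ Q : Type} [Fintype Q] (A : UCB σ Q) (k : ℕ)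
    (f : Q → ℤ) (a : σ) : Q → ℤ := fun q =>
  let pred : Finset Q := Finset.univ.filter fun q' => q ∈ A.δ q' a ∧ 0 ≤ f q'
  if h : pred.Nonempty then
    min (pred.sup' h f + (if A.col1 q then 1 else 0)) ((k : ℤ) + 1)
  else -1

/-- The (unique) run of `D(A,k)` on an ω-word `w`, starting from `f`. -/
noncomputable def detRun {σ Q : Type} [Fintype Q] (A : UCB σ Q) (k : ℕ)
    (f : Q → ℤ) (w : ℕ → σ) : ℕ → Q → ℤ
  | 0 => f
  | n + 1 => detTransFun A k (detRun A k f w n) (w n)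

/-- The state of `D(A,k)` reached from `f` after reading a finite word. -/
noncomputable def detPostW {σ Q : Type} [Fintype Q] (A : UCB σ Q) (k : ℕ) :
    (Q → ℤ) → List σ → Q → ℤ
  | f, [] => f
  | f, a :: u => detPostW A k (detTransFun A k f a) u

/-- The initial counting function `f₀` of `D(A,k)`. -/
noncomputable def initCF {σ Q : Type} (A : UCB σ Q) : Q → ℤ := fun q =>
  if q ∈ A.init then (if A.col1 q then 1 else 0) else -1

/-- `L(D(A,k)[f])`: ω-words whose run of `D(A,k)` from `f` never visits an unsafe
counting function (one taking the value `k+1`). -/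
def langD {σ Q : Type} [Fintype Q] (A : UCB σ Q) (k : ℕ) (f : Q → ℤ) :
    Set (ℕ → σ) :=
  { w | ∀ n, ¬ ∃ q, detRun A k f w n q = (k : ℤ) + 1 }

/-- A complete deterministic safety automaton: the set `bad` of unsafe states is a trap. -/
structure DetSafety (σ Q : Type) where
  start : Q
  δ : Q → σ → Q
  bad : Set Q
  trap : ∀ q ∈ bad, ∀ a, δ q a ∈ bad

namespace DetSafety

variable {σ Q : Type}

/-- State reached after reading a finite word. -/
def postW (A : DetSafety σ Q) : Q → List σ → Q
  | q, [] => q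
  | q, a :: u => postW A (A.δ q a) u

/-- The run of a deterministic automaton on an ω-word. -/
def runOn (A : DetSafety σ Q) (w : ℕ → σ) : ℕ → Q
  | 0 => A.start
  | n + 1 => A.δ (runOn A w n) (w n)

/-- The (safety) ω-language: the run never enters an unsafe state. -/
def omegaLang (A : DetSafety σ Q) : Set (ℕ → σ) :=
  { w | ∀ n, runOn A w n ∉ A.bad }

end DetSafety

/-- A complete deterministic automaton (no acceptance condition). -/
structure DetAuto (σ Q : Type) where
  start : Q
  δ : Q → σ → Q

/-- State reached after reading a finite word. -/
def DetAuto.postW {σ Q : Type} (A : DetAuto σ Q) : Q → List σ → Q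
  | q, [] => q
  | q, a :: u => DetAuto.postW A (A.δ q a) u

/-- Domination order between collections: every element of `A` is below some element of `B`. -/
def acLE {α : Type} (r : α → α → Prop) (A B : Set α) : Prop :=
  ∀ x ∈ A, ∃ y ∈ B, r x y

/-- Downward closure of a collection of subsets of `Y`. -/
def dcl {Y : Type} (A : Set (Set Y)) : Set (Set Y) :=
  { X | ∃ X' ∈ A, X ⊆ X' }

/-- The merged relation `U(∼, p)` for a non-congruent point with successors `s, s'`. -/
def Umerge {M : Type} (r : M → M → Prop) (s s' : M) : M → M → Prop :=
  fun y y' => r y y' ∨ (r y s ∧ r y' s') ∨ (r y' s ∧ r y s')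

/-- Prefix closure of a set of finite words over `I × O`. -/
def prefsE {I O : Type} (E : Set (List (I × O))) : Set (List (I × O)) :=
  { u | ∃ e ∈ E, u <+: e }

/-- Consistency of a set of examples: the output is uniquely determined by each
prefix ending with an input. -/
def ConsistentE {I O : Type} (E : Set (List (I × O))) : Prop :=
  ∀ (u : List (I × O)) (i : I) (o o' : O),
    (u ++ [(i, o)]) ∈ prefsE E → (u ++ [(i, o')]) ∈ prefsE E → o = o'

/-- The prefix-tree acceptor `PTA(E)`: states are the prefixes of `E` (together with ε). -/
noncomputable def PTA {I O : Type} (E : Set (List (I × O))) :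
    PreMealy I O (↥(insert ([] : List (I × O)) (prefsE E))) where
  init := ⟨[], Set.mem_insert _ _⟩
  trans := fun u i =>
    if h : ∃ o : O, (u.1 ++ [(i, o)]) ∈ prefsE E then
      some (h.choose, ⟨u.1 ++ [(i, h.choose)], Set.mem_insert_of_mem _ h.choose_spec⟩)
    else none

/-- The fixpoint labelling `F*` of the states of a preMealy machine by counting functions. -/
noncomputable def Fstar {I O M Q : Type} [Fintype Q] (P : PreMealy I O M)
    (A : UCB (I ⊕ O) Q) (k : ℕ) (m : M) : Q → ℤ := fun q =>
  sSup (insert (-1 : ℤ)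
    { z | ∃ u ∈ P.leftLang m, detPostW A k (initCF A) (flattenWord u) q = z })

/-! The transition `δ^D` sets `f'(q)` to the capped maximum of `f(q') + x` over the predecessors
`q'` of `q` with `f(q') ≥ 0`. This maximum is attained at a single predecessor, and at that
predecessor `f₁ ⊔ f₂` agrees with one of `f₁`, `f₂`; together with monotonicity this makes `δ^D`
commute with `⊔`, hence so does the run. Every run stays `≤ k + 1`, so the joined run hits
`k + 1` exactly when one of the two runs does. -/

open Finset

section DetTransFun

variable {σ Q : Type} [Fintype Q] {A : UCB σ Q} {k : ℕ} {f g : Q → ℤ} {a : σ} {q : Q}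

lemma min_le_detTransFun {q' : Q} (hq' : q ∈ A.δ q' a) (hf : 0 ≤ f q') :
    min (f q' + (if A.col1 q then 1 else 0)) ((k : ℤ) + 1) ≤ detTransFun A k f a q := by
  have hmem : q' ∈ univ.filter fun q' => q ∈ A.δ q' a ∧ 0 ≤ f q' := by simp [hq', hf]
  rw [detTransFun, dif_pos ⟨q', hmem⟩]
  gcongr
  exact le_sup' f hmem

variable (A k f a q) in
lemma detTransFun_eq_neg_one_or_exists :
    detTransFun A k f a q = -1 ∨ ∃ q', q ∈ A.δ q' a ∧ 0 ≤ f q' ∧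
      detTransFun A k f a q = min (f q' + (if A.col1 q then 1 else 0)) ((k : ℤ) + 1) := by
  rw [detTransFun]
  split
  next hpred =>
    obtain ⟨q', hmem, hsup⟩ := exists_mem_eq_sup' hpred f
    rw [mem_filter] at hmem
    exact Or.inr ⟨q', hmem.2.1, hmem.2.2, by rw [hsup]⟩
  next => exact Or.inl rfl

lemma neg_one_le_detTransFun : -1 ≤ detTransFun A k f a q := by
  rcases detTransFun_eq_neg_one_or_exists A k f a q with h | ⟨q', -, hf, h⟩
  · exact h.ge
  · rw [h]
    split_ifs <;> omega

lemma detTransFun_le : detTransFun A k f a q ≤ (k : ℤ) + 1 := by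
  rw [detTransFun]
  split
  next => exact min_le_right _ _
  next => omega

lemma detTransFun_mono (hfg : f ≤ g) : detTransFun A k f a ≤ detTransFun A k g a := by
  intro q
  rcases detTransFun_eq_neg_one_or_exists A k f a q with h | ⟨q', hq', hf, h⟩
  · exact h ▸ neg_one_le_detTransFun
  · calc detTransFun A k f a q
        = min (f q' + (if A.col1 q then 1 else 0)) ((k : ℤ) + 1) := h
      _ ≤ min (g q' + (if A.col1 q then 1 else 0)) ((k : ℤ) + 1) := by gcongr; exact hfg q'
      _ ≤ detTransFun A k g a q := min_le_detTransFun hq' (hf.trans (hfg q'))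

lemma detTransFun_sup (f₁ f₂ : Q → ℤ) :
    detTransFun A k (f₁ ⊔ f₂) a = detTransFun A k f₁ a ⊔ detTransFun A k f₂ a := by
  refine le_antisymm (fun q => ?_)
    (sup_le (detTransFun_mono le_sup_left) (detTransFun_mono le_sup_right))
  rcases detTransFun_eq_neg_one_or_exists A k (f₁ ⊔ f₂) a q with h | ⟨q', hq', hf, h⟩
  · exact h ▸ le_sup_of_le_left neg_one_le_detTransFun
  · rcases le_total (f₂ q') (f₁ q') with h₂₁ | h₁₂
    · have hmax : (f₁ ⊔ f₂) q' = f₁ q' := sup_eq_left.mpr h₂₁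
      rw [hmax] at h hf
      exact h ▸ le_sup_of_le_left (min_le_detTransFun hq' hf)
    · have hmax : (f₁ ⊔ f₂) q' = f₂ q' := sup_eq_right.mpr h₁₂
      rw [hmax] at h hf
      exact h ▸ le_sup_of_le_right (min_le_detTransFun hq' hf)

end DetTransFun

section DetRun

variable {σ Q : Type} [Fintype Q] {A : UCB σ Q} {k : ℕ}

lemma detRun_sup (f₁ f₂ : Q → ℤ) (w : ℕ → σ) (i : ℕ) :
    detRun A k (f₁ ⊔ f₂) w i = detRun A k f₁ w i ⊔ detRun A k f₂ w i := by
  induction i with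
  | zero => rfl
  | succ n ih => rw [detRun, detRun, detRun, ih, detTransFun_sup]

lemma detRun_le {f : Q → ℤ} (hf : ∀ q, f q ≤ (k : ℤ) + 1) (w : ℕ → σ) (i : ℕ) (q : Q) :
    detRun A k f w i q ≤ (k : ℤ) + 1 := by
  cases i with
  | zero => exact hf q
  | succ n => exact detTransFun_le

end DetRun

lemma sup_eq_iff_of_le {α : Type*} [LinearOrder α] {a b c : α} (ha : a ≤ c) (hb : b ≤ c) :
    a ⊔ b = c ↔ a = c ∨ b = c := by
  rcases le_total a b with hab | hba
  · rw [sup_eq_right.mpr hab]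
    exact ⟨Or.inr, fun h => h.elim (fun h => le_antisymm hb (h ▸ hab)) id⟩
  · rw [sup_eq_left.mpr hba]
    exact ⟨Or.inl, fun h => h.elim id (fun h => le_antisymm ha (h ▸ hba))⟩

theorem stmt5_general {σ Q : Type} [Fintype Q]
    (A : UCB σ Q) (k : ℕ) (f₁ f₂ : Q → ℤ)
    (h₁ : f₁ ∈ CFset Q k) (h₂ : f₂ ∈ CFset Q k) (w : ℕ → σ) :
    (∀ (i : ℕ) (q : Q),
        detRun A k (fun q => max (f₁ q) (f₂ q)) w i q
          = max (detRun A k f₁ w i q) (detRun A k f₂ w i q)) ∧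
    ((∀ i : ℕ, ¬ ∃ q, detRun A k (fun q => max (f₁ q) (f₂ q)) w i q = (k : ℤ) + 1) ↔
      ((∀ i : ℕ, ¬ ∃ q, detRun A k f₁ w i q = (k : ℤ) + 1) ∧
       (∀ i : ℕ, ¬ ∃ q, detRun A k f₂ w i q = (k : ℤ) + 1))) := by
  have hrun (i : ℕ) (q : Q) : detRun A k (fun q => max (f₁ q) (f₂ q)) w i q
      = max (detRun A k f₁ w i q) (detRun A k f₂ w i q) :=
    congrFun (detRun_sup f₁ f₂ w i) q
  have hunsafe (i : ℕ) (q : Q) :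
      max (detRun A k f₁ w i q) (detRun A k f₂ w i q) = (k : ℤ) + 1 ↔
        detRun A k f₁ w i q = (k : ℤ) + 1 ∨ detRun A k f₂ w i q = (k : ℤ) + 1 :=
    sup_eq_iff_of_le (detRun_le (fun q => (h₁ q).2) w i q) (detRun_le (fun q => (h₂ q).2) w i q)
  refine ⟨hrun, ?_⟩
  simp only [hrun, hunsafe, exists_or, not_or, forall_and]

/-- the run of `D(A,k)` from `f₁ ⊔ f₂` is the pointwise join of the runs
from `f₁` and from `f₂`; consequently it avoids unsafe states iff both runs do. -/
theorem stmt5 {σ Q : Type} [Fintype σ] [Fintype Q] [Nonempty Q]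
    (A : UCB σ Q) (k : ℕ) (f₁ f₂ : Q → ℤ)
    (h₁ : f₁ ∈ CFset Q k) (h₂ : f₂ ∈ CFset Q k) (w : ℕ → σ) :
    (∀ (i : ℕ) (q : Q),
        detRun A k (fun q => max (f₁ q) (f₂ q)) w i q
          = max (detRun A k f₁ w i q) (detRun A k f₂ w i q)) ∧
    ((∀ i : ℕ, ¬ ∃ q, detRun A k (fun q => max (f₁ q) (f₂ q)) w i q = (k : ℤ) + 1) ↔
      ((∀ i : ℕ, ¬ ∃ q, detRun A k f₁ w i q = (k : ℤ) + 1) ∧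
       (∀ i : ℕ, ¬ ∃ q, detRun A k f₂ w i q = (k : ℤ) + 1))) :=
  stmt5_general A k f₁ f₂ h₁ h₂ w
end

section
/- Let S be a safety specification given by a complete deterministic safety automaton A = (Q, q_0, δ_A, Q_usf) over Σ = I ∪ O, and let P = (M, m_0, Δ) be a preMealy machine such that L(A) is P-realizable. Let (m, i) be a hole of P, o ∈ O, and m' ∈ M. If Post*_A(R_m, i·o) ⊆ R_{m'}, where R_m = { Post*_A(q_0, u) | u ∈ (IO)*, Post*_P(m_0, u) = m }, then L(A) is P'-realizable for the preMealy machine P' = (M, m_0, Δ ∪ {(m,i) ↦ (o,m')}) obtained from P by adding the transition (m,i) ↦ (o,m'). -/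
open scoped Classical

/-!
Let `Mach` be a Mealy machine realizing `L(A)` that contains `P` through an embedding `Φ`.
Graft `P'` onto `Mach`: run a copy of `P'` and, at a hole of `P'` in state `p`, continue as `Mach`
does from `Φ p`. The result is total and contains `P'`. Label a copy state `p` by `R_p` and a
state `n` of `Mach` by the automaton states reached by the words leading `Mach` to `n`. Every
transition respects the labels: the edges of `P` trivially, the new edge by the hypothesis
`Post*_A(R_m, i·o) ⊆ R_{m'}`, and the jumps into `Mach` because `R_p` is contained in the label
of `Φ p`. Finally, no label of `Mach` contains an unsafe state: a finite run of a total machine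
extends to an infinite one, whose interleaving lies in `L(A)`.
-/

namespace DetSafety

variable {σ Q : Type} (A : DetSafety σ Q)

theorem postW_append (q : Q) (u v : List σ) : A.postW q (u ++ v) = A.postW (A.postW q u) v := by
  induction u generalizing q with
  | nil => rfl
  | cons a u ih => exact ih (A.δ q a)

end DetSafety

section Interleave

variable {I O Q : Type}

theorem flattenWord_append (u v : List (I × O)) :
    flattenWord (u ++ v) = flattenWord u ++ flattenWord v :=
  List.flatMap_append

theorem interleave_two_mul (w : ℕ → I × O) (n : ℕ) :
    interleave w (2 * n) = Sum.inl (w n).1 := by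
  simp [interleave]

theorem interleave_two_mul_add_one (w : ℕ → I × O) (n : ℕ) :
    interleave w (2 * n + 1) = Sum.inr (w n).2 := by
  simp [interleave, Nat.add_mod, Nat.add_div]

theorem DetSafety.runOn_interleave_two_mul (A : DetSafety (I ⊕ O) Q) (w : ℕ → I × O)
    (n : ℕ) :
    A.runOn (interleave w) (2 * n) = A.postW A.start (flattenWord ((List.range n).map w)) := by
  induction n with
  | zero => rfl
  | succ n ih =>
    rw [List.range_succ, List.map_append, flattenWord_append, A.postW_append, ← ih]
    simp [DetSafety.runOn, flattenWord, DetSafety.postW, Nat.mul_succ, interleave_two_mul,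
      interleave_two_mul_add_one]

theorem DetSafety.interleave_mem_omegaLang (A : DetSafety (I ⊕ O) Q) {w : ℕ → I × O}
    (h : ∀ n, A.postW A.start (flattenWord ((List.range n).map w)) ∉ A.bad) :
    interleave w ∈ A.omegaLang := by
  have heven : ∀ n, A.runOn (interleave w) (2 * n) ∉ A.bad := fun n => by
    rw [A.runOn_interleave_two_mul]
    exact h n
  intro k hk
  obtain ⟨n, rfl | rfl⟩ := Nat.even_or_odd' k
  · exact heven n hk
  · exact heven (n + 1) (A.trap _ hk _)

end Interleave

namespace PreMealy

variable {I O M N : Type}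

theorem step_eq_some_iff (P : PreMealy I O M) {s s' : M} {x : I × O} :
    P.step s x = some s' ↔ P.trans s x.1 = some (x.2, s') := by
  unfold step
  rcases P.trans s x.1 with _ | ⟨o, t⟩
  · simp
  · by_cases ho : o = x.2 <;> simp [ho, eq_comm]

theorem runFrom_cons (P : PreMealy I O M) (s : M) (x : I × O) (u : List (I × O)) :
    P.runFrom s (x :: u) = (P.step s x).bind (P.runFrom · u) := by
  simp only [runFrom]
  cases P.step s x <;> rfl

theorem runFrom_append (P : PreMealy I O M) (s : M) (u v : List (I × O)) :
    P.runFrom s (u ++ v) = (P.runFrom s u).bind (P.runFrom · v) := by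
  induction u generalizing s with
  | nil => rfl
  | cons x u ih =>
    rw [List.cons_append, runFrom_cons, runFrom_cons]
    cases P.step s x <;> simp [ih]

theorem runFrom_concat {P : PreMealy I O M} {s p p' : M} {v : List (I × O)} {x : I × O}
    (hv : P.runFrom s v = some p) (hx : P.step p x = some p') :
    P.runFrom s (v ++ [x]) = some p' := by
  simp [runFrom_append, hv, hx, runFrom]

theorem runFrom_map_of_trans {P : PreMealy I O M} {P₂ : PreMealy I O N} {Φ : M → N}
    (hΦ : ∀ p i o q, P.trans p i = some (o, q) → P₂.trans (Φ p) i = some (o, Φ q)) :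
    ∀ (u : List (I × O)) {p q : M}, P.runFrom p u = some q →
      P₂.runFrom (Φ p) u = some (Φ q)
  | [], p, q, h => by cases h; rfl
  | x :: u, p, q, h => by
    rw [runFrom_cons] at h ⊢
    obtain ⟨p₁, hx, hu⟩ := Option.bind_eq_some_iff.1 h
    have hx' : P₂.step (Φ p) x = some (Φ p₁) :=
      step_eq_some_iff _ |>.2 (hΦ _ _ _ _ (step_eq_some_iff _ |>.1 hx))
    rw [hx', Option.bind_some]
    exact runFrom_map_of_trans hΦ u hu

theorem exists_forall_runFrom_isSome [Nonempty I] {P : PreMealy I O M} (htot : P.Total)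
    (s : M) :
    ∃ w : ℕ → I × O, ∀ n, (P.runFrom s ((List.range n).map w)).isSome := by
  obtain ⟨i₀⟩ := ‹Nonempty I›
  choose t ht using fun s => Option.isSome_iff_exists.1 (htot s i₀)
  let next : M → M := fun s => (t s).2
  have hrun : ∀ n s, P.runFrom s ((List.range n).map fun k => (i₀, (t (next^[k] s)).1)) =
      some (next^[n] s) := by
    intro n
    induction n with
    | zero => intro s; rfl
    | succ n ih =>
      intro s
      have hstep : P.step s (i₀, (t s).1) = some (next s) := (step_eq_some_iff _).2 (ht s)
      rw [List.range_succ_eq_map, List.map_cons, List.map_map, runFrom_cons]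
      simpa [hstep, Function.comp_def, Function.iterate_succ_apply] using ih (next s)
  exact ⟨_, fun n => by rw [hrun]; rfl⟩

theorem exists_extension_of_runFrom_isSome [Nonempty I] {P : PreMealy I O M} (htot : P.Total) :
    ∀ (v : List (I × O)) (s : M), (P.runFrom s v).isSome →
      ∃ w : ℕ → I × O, (∀ n, (P.runFrom s ((List.range n).map w)).isSome) ∧
        (List.range v.length).map w = v
  | [], s, _ =>
    let ⟨w, hw⟩ := exists_forall_runFrom_isSome htot s
    ⟨w, hw, rfl⟩
  | x :: v, s, h => by
    rw [runFrom_cons] at h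
    obtain ⟨r, hr⟩ := Option.isSome_iff_exists.1 h
    obtain ⟨s₁, hx, hv⟩ := Option.bind_eq_some_iff.1 hr
    obtain ⟨w, hw, hwv⟩ := exists_extension_of_runFrom_isSome htot v s₁ (by simp [hv])
    refine ⟨fun | 0 => x | k + 1 => w k, ?_, ?_⟩
    · rintro (_ | n)
      · rfl
      · rw [List.range_succ_eq_map, List.map_cons, List.map_map, runFrom_cons, hx,
          Option.bind_some]
        exact hw n
    · rw [List.length_cons, List.range_succ_eq_map, List.map_cons, List.map_map]
      exact congrArg (x :: ·) hwv

end PreMealy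

section ReachedStates

variable {I O M N Q : Type} (A : DetSafety (I ⊕ O) Q)

/-- `R_p` in the paper's notation. -/
def reachedStates (P : PreMealy I O M) (p : M) : Set Q :=
  (fun u => A.postW A.start (flattenWord u)) '' P.leftLang p

theorem start_mem_reachedStates_init (P : PreMealy I O M) : A.start ∈ reachedStates A P P.init :=
  ⟨[], rfl, rfl⟩

theorem postW_mem_reachedStates_of_step {P : PreMealy I O M} {p p' : M} {x : I × O} {q : Q}
    (hq : q ∈ reachedStates A P p) (hx : P.step p x = some p') :
    A.postW q (flattenWord [x]) ∈ reachedStates A P p' := by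
  obtain ⟨v, hv, rfl⟩ := hq
  exact ⟨v ++ [x], PreMealy.runFrom_concat hv hx, by
    dsimp only
    rw [flattenWord_append, A.postW_append]⟩

theorem reachedStates_subset_of_trans {P : PreMealy I O M} {P₂ : PreMealy I O N} {Φ : M → N}
    (hinit : Φ P.init = P₂.init)
    (hΦ : ∀ p i o q, P.trans p i = some (o, q) → P₂.trans (Φ p) i = some (o, Φ q))
    (p : M) : reachedStates A P p ⊆ reachedStates A P₂ (Φ p) := by
  rintro _ ⟨v, hv, rfl⟩
  have hv₂ := PreMealy.runFrom_map_of_trans hΦ v hv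
  rw [hinit] at hv₂
  exact ⟨v, hv₂, rfl⟩

theorem notMem_bad_of_mem_reachedStates [Nonempty I] {P : PreMealy I O M} (htot : P.Total)
    (hsafe : P.omegaLang ⊆ { w | interleave w ∈ A.omegaLang }) {p : M} {q : Q}
    (hq : q ∈ reachedStates A P p) : q ∉ A.bad := by
  obtain ⟨v, hv, rfl⟩ := hq
  obtain ⟨w, hw, hwv⟩ := PreMealy.exists_extension_of_runFrom_isSome htot v P.init
    (Option.isSome_iff_exists.2 ⟨p, hv⟩)
  have := hsafe hw (2 * v.length)
  rwa [A.runOn_interleave_two_mul, hwv] at this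

theorem postW_flattenWord_mem_of_runFrom (P : PreMealy I O M) (L : M → Set Q)
    (hL : ∀ {s s' x q}, q ∈ L s → P.step s x = some s' →
      A.postW q (flattenWord [x]) ∈ L s') :
    ∀ (u : List (I × O)) {s s' : M} {q : Q}, q ∈ L s → P.runFrom s u = some s' →
      A.postW q (flattenWord u) ∈ L s'
  | [], s, s', q, hq, h => by cases h; exact hq
  | x :: u, s, s', q, hq, h => by
    rw [PreMealy.runFrom_cons] at h
    obtain ⟨s₁, hx, hu⟩ := Option.bind_eq_some_iff.1 h
    rw [← List.singleton_append, flattenWord_append, A.postW_append]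
    exact postW_flattenWord_mem_of_runFrom P L hL u (hL hq hx) hu

end ReachedStates

namespace PreMealy

variable {I O M N Q : Type}

noncomputable def addEdge (P : PreMealy I O M) (m : M) (i : I) (o : O) (m' : M) :
    PreMealy I O M :=
  ⟨P.init, fun a b => if a = m ∧ b = i then some (o, m') else P.trans a b⟩

def graft (P : PreMealy I O M) (Mach : PreMealy I O N) (Φ : M → N) : PreMealy I O (M ⊕ N) where
  init := Sum.inl P.init
  trans
    | Sum.inl p, j => ((P.trans p j).map (Prod.map id Sum.inl)).or
        ((Mach.trans (Φ p) j).map (Prod.map id Sum.inr))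
    | Sum.inr n, j => (Mach.trans n j).map (Prod.map id Sum.inr)

theorem graft_total (P : PreMealy I O M) {Mach : PreMealy I O N} (Φ : M → N)
    (htot : Mach.Total) :
    (P.graft Mach Φ).Total := by
  rintro (p | n) j
  · simp [graft, htot (Φ p) j]
  · simp [graft, htot n j]

theorem subgraph_graft (P : PreMealy I O M) (Mach : PreMealy I O N) (Φ : M → N) :
    Subgraph P (P.graft Mach Φ) := by
  refine ⟨Sum.inl, Sum.inl_injective, rfl, fun p j o q => ?_⟩
  rcases h : P.trans p j with _ | ⟨o', q'⟩ <;> simp [graft, h]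

variable (A : DetSafety (I ⊕ O) Q)

theorem postW_mem_reachedStates_of_addEdge_step {P : PreMealy I O M} {m m' : M} {i : I}
    {o : O}
    (hpost : (fun q => A.postW q [Sum.inl i, Sum.inr o]) '' reachedStates A P m
      ⊆ reachedStates A P m')
    {p p' : M} {x : I × O} {q : Q} (hq : q ∈ reachedStates A P p)
    (hx : (P.addEdge m i o m').step p x = some p') :
    A.postW q (flattenWord [x]) ∈ reachedStates A P p' := by
  rw [step_eq_some_iff] at hx
  by_cases hnew : p = m ∧ x.1 = i
  · obtain ⟨rfl, hxi⟩ := hnew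
    obtain ⟨rfl, rfl⟩ : o = x.2 ∧ m' = p' := by simpa [addEdge, hxi] using hx
    exact hpost ⟨q, hq, by rw [← hxi]; rfl⟩
  · have hold : P.trans p x.1 = some (x.2, p') := by simpa [addEdge, hnew] using hx
    exact postW_mem_reachedStates_of_step A hq ((step_eq_some_iff P).2 hold)

theorem postW_mem_reachedStates_of_graft_step {P P' : PreMealy I O M} {Mach : PreMealy I O N}
    {Φ : M → N} (hinit : Φ P.init = Mach.init)
    (hΦ : ∀ p i o q, P.trans p i = some (o, q) → Mach.trans (Φ p) i = some (o, Φ q))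
    (hP' : ∀ {p p' x q}, q ∈ reachedStates A P p → P'.step p x = some p' →
      A.postW q (flattenWord [x]) ∈ reachedStates A P p')
    {s s' : M ⊕ N} {x : I × O} {q : Q}
    (hq : q ∈ Sum.elim (reachedStates A P) (reachedStates A Mach) s)
    (hx : (P'.graft Mach Φ).step s x = some s') :
    A.postW q (flattenWord [x]) ∈ Sum.elim (reachedStates A P) (reachedStates A Mach) s' := by
  have hMach : ∀ {n q}, q ∈ reachedStates A Mach n →
      (Mach.trans n x.1).map (Prod.map id Sum.inr) = some (x.2, s') →
      A.postW q (flattenWord [x]) ∈ Sum.elim (reachedStates A P) (reachedStates A Mach) s' := by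
    intro n q hq h
    obtain ⟨⟨o, n'⟩, hn, he⟩ := Option.map_eq_some_iff.1 h
    obtain ⟨rfl, rfl⟩ : o = x.2 ∧ Sum.inr n' = s' := by simpa using he
    exact postW_mem_reachedStates_of_step A hq ((step_eq_some_iff Mach).2 hn)
  rw [step_eq_some_iff] at hx
  rcases s with p | n
  · cases hp : P'.trans p x.1 with
    | some t =>
      obtain ⟨o, p'⟩ := t
      obtain ⟨rfl, rfl⟩ : o = x.2 ∧ Sum.inl p' = s' := by simpa [graft, hp] using hx
      exact hP' hq ((step_eq_some_iff P').2 hp)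
    | none =>
      simp only [graft, hp, Option.map_none, Option.none_or] at hx
      exact hMach (reachedStates_subset_of_trans A hinit hΦ p hq) hx
  · exact hMach hq hx

end PreMealy

theorem stmt14_general {I O M Q : Type} [Fintype M]
    (A : DetSafety (I ⊕ O) Q) (P : PreMealy I O M)
    (hreal : PRealizable P { w | interleave w ∈ A.omegaLang })
    (m : M) (i : I) (o : O) (m' : M)
    (hpost : (fun q => A.postW q [Sum.inl i, Sum.inr o]) ''
        ((fun u => A.postW A.start (flattenWord u)) '' P.leftLang m)
      ⊆ (fun u => A.postW A.start (flattenWord u)) '' P.leftLang m') :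
    PRealizable
      ⟨P.init, fun a b => if a = m ∧ b = i then some (o, m') else P.trans a b⟩
      { w | interleave w ∈ A.omegaLang } := by
  obtain ⟨N, _, Mach, htot, ⟨Φ, -, hinit, hΦ⟩, hsafe⟩ := hreal
  replace hΦ := fun p j o q => (hΦ p j o q).1
  refine ⟨M ⊕ N, inferInstance, (P.addEdge m i o m').graft Mach Φ,
    PreMealy.graft_total _ Φ htot, PreMealy.subgraph_graft _ Mach Φ,
    fun w hw => A.interleave_mem_omegaLang fun n => ?_⟩
  have : Nonempty I := ⟨(w 0).1⟩
  obtain ⟨s, hs⟩ := Option.isSome_iff_exists.1 (hw n)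
  have hlabel := postW_flattenWord_mem_of_runFrom A _ _
    (PreMealy.postW_mem_reachedStates_of_graft_step A hinit hΦ
      (PreMealy.postW_mem_reachedStates_of_addEdge_step A hpost))
    _ (start_mem_reachedStates_init A P) hs
  rcases s with p | n
  · exact notMem_bad_of_mem_reachedStates A htot hsafe
      (reachedStates_subset_of_trans A hinit hΦ p hlabel)
  · exact notMem_bad_of_mem_reachedStates A htot hsafe hlabel

/-- key lemma for termination of the completion procedure. If `L(A)` is
`P`-realizable, `(m,i)` is a hole of `P`, and `Post*_A(R_m, i·o) ⊆ R_{m'}`, then `L(A)`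
is `P'`-realizable, where `P'` is `P` with the added transition `(m,i) ↦ (o,m')`. -/
theorem stmt14 {I O M Q : Type} [Fintype I] [Nonempty I] [Fintype O] [Nonempty O]
    [Fintype M] [Fintype Q]
    (A : DetSafety (I ⊕ O) Q) (P : PreMealy I O M)
    (hreal : PRealizable P { w | interleave w ∈ A.omegaLang })
    (m : M) (i : I) (hhole : P.Hole m i) (o : O) (m' : M)
    (hpost : (fun q => A.postW q [Sum.inl i, Sum.inr o]) ''
        ((fun u => A.postW A.start (flattenWord u)) '' P.leftLang m)
      ⊆ (fun u => A.postW A.start (flattenWord u)) '' P.leftLang m') :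
    PRealizable
      ⟨P.init, fun a b => if a = m ∧ b = i then some (o, m') else P.trans a b⟩
      { w | interleave w ∈ A.omegaLang } :=
  stmt14_general A P hreal m i o m' hpost
end
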